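/- Let ε ∈ [0, 1/2] and c ∈ ℝ. Suppose W : ℝ × ℝ² → ℝ is twice continuously differentiable on ℝ × closure(Ω) and ℓ-periodic in x, W vanishes on ℝ × ∂Ω, W and its first partial derivatives are square integrable on ℝ × Ω_p and tend to 0 uniformly in (x,z) as |s| → ∞, and −c ∂_s W − L_ε W = 0 holds at every point of ℝ × Ω. Then W is identically zero on ℝ × closure(Ω). -/

import Mathlib

open MeasureTheory Set

/-- Directional derivative of `f : ℝ × ℝ × ℝ → ℝ` (coordinates `(s, x, z)`)
in the direction `v`. -/
noncomputable def Dv (f : ℝ × ℝ × ℝ → ℝ) (v : ℝ × ℝ × ℝ) : ℝ × ℝ × ℝ → ℝ :=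
  fun p => fderiv ℝ f p v

/-- The regularized moving-frame operator `L_ε = (∂_x + ∂_s)² + ∂_z² + ε ∂_s²`. -/
noncomputable def Leps (ε : ℝ) (f : ℝ × ℝ × ℝ → ℝ) : ℝ × ℝ × ℝ → ℝ :=
  fun p => Dv (Dv f (1, 1, 0)) (1, 1, 0) p + Dv (Dv f (0, 0, 1)) (0, 0, 1) p
    + ε * Dv (Dv f (1, 0, 0)) (1, 0, 0) p

/-!
A maximum principle argument, applied to `W` and to `-W`. If `W > 0` somewhere, then for small
`δ > 0` the function `w = W + δ z²` attains its maximum over `ℝ × closure Ω`: by periodicity in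
`x` one may restrict to a period cell, and by the decay in `s` to a compact part of it. This
maximum exceeds the weight `δ z²`, so it is attained off the boundary, where `W = 0`. There
`∂_s W = 0` and all second directional derivatives of `w` are `≤ 0`, hence
`L_ε W = L_ε w - 2δ < 0`, contradicting the equation.
-/

open Filter Topology

theorem IsLocalMax.deriv_deriv_nonpos {f : ℝ → ℝ} {a : ℝ} (h : IsLocalMax f a)
    (hc : ContinuousAt f a) : deriv (deriv f) a ≤ 0 := by
  by_contra! hpos
  -- by the second-derivative test `a` is also a local minimum, so `f` is locally constant
  have hconst : f =ᶠ[𝓝 a] fun _ => f a :=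
    ((isLocalMin_of_deriv_deriv_pos hpos h.deriv_eq_zero hc).and h).mono
      fun _ hx => le_antisymm hx.2 hx.1
  have hderiv : deriv f =ᶠ[𝓝 a] fun _ => 0 :=
    hconst.eventuallyEq_nhds.mono fun _ hx => by rw [hx.deriv_eq, deriv_const]
  simp [hderiv.deriv_eq] at hpos

section SecondOrder

variable {E F : Type*} [NormedAddCommGroup E] [NormedSpace ℝ E] [NormedAddCommGroup F]
  [NormedSpace ℝ F]

theorem DifferentiableAt.hasDerivAt_comp_line {f : E → F} {p v : E} {t : ℝ}
    (hf : DifferentiableAt ℝ f (p + t • v)) :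
    HasDerivAt (fun s : ℝ => f (p + s • v)) (fderiv ℝ f (p + t • v) v) t := by
  have hline : HasDerivAt (fun s : ℝ => p + s • v) v t := by
    simpa using ((hasDerivAt_id t).smul_const v).const_add p
  exact hf.hasFDerivAt.comp_hasDerivAt t hline

theorem ContDiffAt.differentiableAt_fderiv_apply {f : E → F} {p : E} (hf : ContDiffAt ℝ 2 f p)
    (v : E) : DifferentiableAt ℝ (fun q => fderiv ℝ f q v) p :=
  ((hf.fderiv_right (m := 1) le_rfl).differentiableAt one_ne_zero).clm_apply
    (differentiableAt_const v)

theorem fderiv_fderiv_apply_add {f g : E → F} {p : E} (hf : ContDiffAt ℝ 2 f p)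
    (hg : ContDiffAt ℝ 2 g p) (v w : E) :
    fderiv ℝ (fun q => fderiv ℝ (fun y => f y + g y) q v) p w =
      fderiv ℝ (fun q => fderiv ℝ f q v) p w + fderiv ℝ (fun q => fderiv ℝ g q v) p w := by
  have hev : (fun q => fderiv ℝ (fun y => f y + g y) q v)
      =ᶠ[𝓝 p] fun q => fderiv ℝ f q v + fderiv ℝ g q v := by
    filter_upwards [hf.eventually (by simp), hg.eventually (by simp)] with q hfq hgq
    rw [fderiv_fun_add (hfq.differentiableAt two_ne_zero) (hgq.differentiableAt two_ne_zero)]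
    rfl
  rw [hev.fderiv_eq, fderiv_fun_add (hf.differentiableAt_fderiv_apply v)
    (hg.differentiableAt_fderiv_apply v)]
  rfl

theorem IsLocalMax.fderiv_fderiv_apply_nonpos {f : E → ℝ} {p : E} (h : IsLocalMax f p)
    (hf : ContDiffAt ℝ 2 f p) (v : E) : fderiv ℝ (fun q => fderiv ℝ f q v) p v ≤ 0 := by
  have hf0 : ContDiffAt ℝ 2 f (p + (0 : ℝ) • v) := by simpa using hf
  have hline : ContinuousAt (fun t : ℝ => p + t • v) 0 := by fun_prop
  have hmax : IsLocalMax (fun t : ℝ => f (p + t • v)) 0 :=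
    IsLocalMax.comp_continuous (by simpa using h) hline
  have hderiv : deriv (fun t : ℝ => f (p + t • v)) =ᶠ[𝓝 0] fun t => fderiv ℝ f (p + t • v) v :=
    (hline.eventually (hf0.eventually (by simp))).mono fun t ht =>
      (ht.differentiableAt two_ne_zero).hasDerivAt_comp_line.deriv
  have hderiv2 := (hf0.differentiableAt_fderiv_apply v).hasDerivAt_comp_line
  rw [zero_smul, add_zero] at hderiv2
  rw [← hderiv2.deriv, ← hderiv.deriv_eq]
  exact hmax.deriv_deriv_nonpos (hf0.continuousAt.comp (f := fun t : ℝ => p + t • v) hline)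

end SecondOrder

theorem Dv_neg (f : ℝ × ℝ × ℝ → ℝ) (v : ℝ × ℝ × ℝ) :
    Dv (fun q => -f q) v = fun q => -Dv f v q := by
  ext q
  simp [Dv, fderiv_fun_neg]

theorem Leps_neg (ε : ℝ) (f : ℝ × ℝ × ℝ → ℝ) (p : ℝ × ℝ × ℝ) :
    Leps ε (fun q => -f q) p = -Leps ε f p := by
  simp only [Leps, Dv_neg]
  ring

theorem Dv_eq_deriv {f : ℝ × ℝ × ℝ → ℝ} {p : ℝ × ℝ × ℝ} (hf : DifferentiableAt ℝ f p)
    (v : ℝ × ℝ × ℝ) : Dv f v p = deriv (fun t : ℝ => f (p + t • v)) 0 :=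
  hf.lineDeriv_eq_fderiv.symm

theorem Leps_add (ε : ℝ) {f g : ℝ × ℝ × ℝ → ℝ} {p : ℝ × ℝ × ℝ} (hf : ContDiffAt ℝ 2 f p)
    (hg : ContDiffAt ℝ 2 g p) : Leps ε (fun q => f q + g q) p = Leps ε f p + Leps ε g p := by
  unfold Leps Dv
  rw [fderiv_fderiv_apply_add hf hg, fderiv_fderiv_apply_add hf hg,
    fderiv_fderiv_apply_add hf hg]
  ring

theorem Dv_const_mul_sq (a : ℝ) (v : ℝ × ℝ × ℝ) :
    Dv (fun q : ℝ × ℝ × ℝ => a * q.2.2 ^ 2) v = fun q => 2 * a * q.2.2 * v.2.2 := by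
  ext q
  rw [Dv_eq_deriv (by fun_prop)]
  simp [mul_assoc, mul_left_comm]

theorem Leps_const_mul_sq (ε a : ℝ) (p : ℝ × ℝ × ℝ) :
    Leps ε (fun q : ℝ × ℝ × ℝ => a * q.2.2 ^ 2) p = 2 * a := by
  simp only [Leps, Dv_const_mul_sq]
  rw [Dv_eq_deriv (by fun_prop), Dv_eq_deriv (by fun_prop), Dv_eq_deriv (by fun_prop)]
  simp

theorem IsLocalMax.Leps_nonpos {ε : ℝ} (hε : 0 ≤ ε) {f : ℝ × ℝ × ℝ → ℝ} {p : ℝ × ℝ × ℝ}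
    (h : IsLocalMax f p) (hf : ContDiffAt ℝ 2 f p) : Leps ε f p ≤ 0 := by
  have hsx : Dv (Dv f (1, 1, 0)) (1, 1, 0) p ≤ 0 := h.fderiv_fderiv_apply_nonpos hf _
  have hz : Dv (Dv f (0, 0, 1)) (0, 0, 1) p ≤ 0 := h.fderiv_fderiv_apply_nonpos hf _
  have hs : Dv (Dv f (1, 0, 0)) (1, 0, 0) p ≤ 0 := h.fderiv_fderiv_apply_nonpos hf _
  simp only [Leps]
  linarith [mul_nonpos_of_nonneg_of_nonpos hε hs]

theorem pde_ne_zero_of_isLocalMax_add_sq {ε c δ : ℝ} (hε : 0 ≤ ε) (hδ : 0 < δ)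
    {W : ℝ × ℝ × ℝ → ℝ} {p : ℝ × ℝ × ℝ} (hW : ContDiffAt ℝ 2 W p)
    (hmax : IsLocalMax (fun q => W q + δ * q.2.2 ^ 2) p) :
    -c * Dv W (1, 0, 0) p - Leps ε W p ≠ 0 := by
  have hφ : ContDiffAt ℝ 2 (fun q : ℝ × ℝ × ℝ => δ * q.2.2 ^ 2) p := by fun_prop
  have hs : Dv W (1, 0, 0) p = 0 := by
    have h := congrArg (· (1, 0, 0)) hmax.fderiv_eq_zero
    rw [fderiv_fun_add (hW.differentiableAt two_ne_zero) (hφ.differentiableAt two_ne_zero)] at h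
    change Dv W (1, 0, 0) p + Dv (fun q => δ * q.2.2 ^ 2) (1, 0, 0) p = 0 at h
    simpa [Dv_const_mul_sq] using h
  have hL : Leps ε W p + 2 * δ ≤ 0 := by
    rw [← Leps_const_mul_sq ε δ p, ← Leps_add ε hW hφ]
    exact hmax.Leps_nonpos hε (hW.add hφ)
  rw [hs]
  linarith

theorem mem_closure_iff_add_of_periodic {Ω : Set (ℝ × ℝ)} {ℓ : ℝ}
    (hΩ : ∀ q : ℝ × ℝ, q ∈ Ω ↔ (q.1 + ℓ, q.2) ∈ Ω) (q : ℝ × ℝ) :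
    q ∈ closure Ω ↔ (q.1 + ℓ, q.2) ∈ closure Ω := by
  let e : (ℝ × ℝ) ≃ₜ (ℝ × ℝ) := (Homeomorph.addRight ℓ).prodCongr (Homeomorph.refl ℝ)
  have he : e ⁻¹' Ω = Ω := Set.ext fun q => (hΩ q).symm
  change q ∈ closure Ω ↔ q ∈ e ⁻¹' closure Ω
  rw [e.preimage_closure, he]

theorem exists_mem_Ico_of_periodic {C : Set (ℝ × ℝ)} {ℓ : ℝ} (hℓ : 0 < ℓ)
    (hC : ∀ q : ℝ × ℝ, q ∈ C ↔ (q.1 + ℓ, q.2) ∈ C) {F : ℝ × ℝ × ℝ → ℝ}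
    (hF : ∀ s x z : ℝ, F (s, x + ℓ, z) = F (s, x, z)) (s x z : ℝ) :
    ∃ y ∈ Ico 0 ℓ, ((x, z) ∈ C ↔ (y, z) ∈ C) ∧ F (s, x, z) = F (s, y, z) := by
  have hper : Function.Periodic (fun x => (((x, z) ∈ C : Prop), F (s, x, z))) ℓ := fun x => by
    simp only [Prod.mk.injEq, hF, eq_iff_iff, and_true]
    exact (hC (x, z)).symm
  obtain ⟨y, hy, hxy⟩ := hper.exists_mem_Ico₀ hℓ x
  simp only [Prod.mk.injEq, eq_iff_iff] at hxy
  exact ⟨y, hy, hxy⟩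

theorem exists_isMaxOn_of_periodic {C : Set (ℝ × ℝ)} {ℓ a b R : ℝ} (hℓ : 0 < ℓ)
    (hCc : IsClosed C) (hCb : C ⊆ univ ×ˢ Icc a b) (hC : ∀ q : ℝ × ℝ, q ∈ C ↔ (q.1 + ℓ, q.2) ∈ C)
    {F : ℝ × ℝ × ℝ → ℝ} (hFc : ContinuousOn F (univ ×ˢ C))
    (hF : ∀ s x z : ℝ, F (s, x + ℓ, z) = F (s, x, z)) {p₁ : ℝ × ℝ × ℝ} (hp₁ : p₁ ∈ univ ×ˢ C)
    (hR : ∀ p ∈ univ ×ˢ C, R ≤ |p.1| → F p < F p₁) :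
    ∃ p₀ ∈ univ ×ˢ C, IsMaxOn F (univ ×ˢ C) p₀ := by
  set K := Icc (-R) R ×ˢ (C ∩ Icc 0 ℓ ×ˢ Icc a b)
  have hK : IsCompact K := isCompact_Icc.prod ((isCompact_Icc.prod isCompact_Icc).inter_left hCc)
  have hKC : K ⊆ univ ×ˢ C := prod_mono (subset_univ _) inter_subset_left
  have hred : ∀ p ∈ univ ×ˢ C, (∃ p' ∈ K, F p' = F p) ∨ F p < F p₁ := by
    rintro ⟨s, x, z⟩ ⟨-, hp⟩
    by_cases hs : R ≤ |s|
    · exact Or.inr (hR _ ⟨trivial, hp⟩ hs)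
    obtain ⟨y, hy, hCy, hFy⟩ := exists_mem_Ico_of_periodic hℓ hC hF s x z
    have hyC := hCy.1 hp
    exact Or.inl ⟨(s, y, z), ⟨abs_le.1 (not_le.1 hs).le, hyC, Ico_subset_Icc_self hy,
      (hCb hyC).2⟩, hFy.symm⟩
  obtain ⟨p₁', hp₁'K, hFp₁'⟩ := (hred p₁ hp₁).resolve_right (lt_irrefl _)
  obtain ⟨p₀, hp₀K, hmax⟩ := hK.exists_isMaxOn ⟨p₁', hp₁'K⟩ (hFc.mono hKC)
  refine ⟨p₀, hKC hp₀K, fun p hp => show F p ≤ F p₀ from ?_⟩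
  rcases hred p hp with ⟨p', hp'K, hFp'⟩ | hlt
  · exact hFp' ▸ (hmax hp'K : F p' ≤ F p₀)
  · exact (hlt.trans_le (hFp₁' ▸ (hmax hp₁'K : F p₁' ≤ F p₀))).le

theorem le_zero_of_periodic_solution {ℓ lam : ℝ} (hℓ : 0 < ℓ) {Ω : Set (ℝ × ℝ)}
    (hΩopen : IsOpen Ω) (hΩsub : Ω ⊆ (univ : Set ℝ) ×ˢ Ioo (-lam) lam)
    (hΩper : ∀ q : ℝ × ℝ, q ∈ Ω ↔ (q.1 + ℓ, q.2) ∈ Ω) {ε c : ℝ} (hε : 0 ≤ ε)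
    {W : ℝ × ℝ × ℝ → ℝ} (hWreg : ContDiffOn ℝ 2 W ((univ : Set ℝ) ×ˢ closure Ω))
    (hWper : ∀ s x z : ℝ, W (s, x + ℓ, z) = W (s, x, z))
    (hWbd : ∀ s : ℝ, ∀ q ∈ frontier Ω, W (s, q.1, q.2) = 0)
    (hWdecay : ∀ δ : ℝ, 0 < δ → ∃ R : ℝ, ∀ s : ℝ, R ≤ |s| →
      ∀ q ∈ closure Ω, |W (s, q.1, q.2)| ≤ δ)
    (hpde : ∀ s : ℝ, ∀ q ∈ Ω,
      -c * Dv W (1, 0, 0) (s, q.1, q.2) - Leps ε W (s, q.1, q.2) = 0) :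
    ∀ s : ℝ, ∀ q ∈ closure Ω, W (s, q.1, q.2) ≤ 0 := by
  by_contra! ⟨s₁, q₁, hq₁, hpos⟩
  set S : Set (ℝ × ℝ × ℝ) := univ ×ˢ closure Ω
  set a := W (s₁, q₁.1, q₁.2)
  set δ := a / (4 * (1 + lam ^ 2))
  have hδ : 0 < δ := by positivity
  set w : ℝ × ℝ × ℝ → ℝ := fun p => W p + δ * p.2.2 ^ 2
  have hΩb : closure Ω ⊆ univ ×ˢ Icc (-lam) lam :=
    closure_minimal (hΩsub.trans (prod_mono subset_rfl Ioo_subset_Icc_self))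
      (isClosed_univ.prod isClosed_Icc)
  have hweight : ∀ p ∈ S, δ * p.2.2 ^ 2 ≤ a / 4 := by
    rintro p ⟨-, hp⟩
    obtain ⟨hz₁, hz₂⟩ := (hΩb hp).2
    calc δ * p.2.2 ^ 2 ≤ δ * (1 + lam ^ 2) := by gcongr; nlinarith
      _ = a / 4 := by simp only [δ]; field_simp
  have hS₁ : (s₁, q₁.1, q₁.2) ∈ S := ⟨trivial, hq₁⟩
  have hw₁ : a ≤ w (s₁, q₁.1, q₁.2) := le_add_of_nonneg_right (by positivity)
  obtain ⟨R, hR⟩ := hWdecay (a / 4) (by positivity)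
  obtain ⟨p₀, hp₀S, hmax⟩ := exists_isMaxOn_of_periodic (F := w) hℓ isClosed_closure hΩb
    (mem_closure_iff_add_of_periodic hΩper)
    (hWreg.continuousOn.add (Continuous.continuousOn (by fun_prop)))
    (fun s x z => by simp only [w, hWper]) hS₁ (R := R) fun p hp hpR => by
      linarith [(abs_le.1 (hR p.1 hpR p.2 hp.2)).2, hweight p hp]
  have hw₀ : a ≤ w p₀ := hw₁.trans (hmax hS₁)
  -- `w p₀ ≥ a` while the weight is at most `a / 4`, so `W p₀ ≠ 0` and `p₀` is off the boundary
  have hp₀Ω : p₀.2 ∈ Ω := by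
    by_contra hnot
    have hW₀ : W p₀ = 0 := hWbd p₀.1 p₀.2 ⟨hp₀S.2, by rwa [hΩopen.interior_eq]⟩
    linarith [hweight p₀ hp₀S, show w p₀ = W p₀ + δ * p₀.2.2 ^ 2 from rfl]
  have hSnhds : S ∈ 𝓝 p₀ :=
    mem_of_superset ((isOpen_univ.prod hΩopen).mem_nhds ⟨trivial, hp₀Ω⟩)
      (prod_mono subset_rfl subset_closure)
  exact pde_ne_zero_of_isLocalMax_add_sq hε hδ (hWreg.contDiffAt hSnhds)
    (hmax.isLocalMax hSnhds) (hpde p₀.1 p₀.2 hp₀Ω)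

theorem stmt_4_general (lam ℓ : ℝ) (hℓ : 0 < ℓ)
    (Ω : Set (ℝ × ℝ)) (hΩopen : IsOpen Ω)
    (hΩsub : Ω ⊆ (univ : Set ℝ) ×ˢ Ioo (-lam) lam)
    (hΩper : ∀ q : ℝ × ℝ, q ∈ Ω ↔ (q.1 + ℓ, q.2) ∈ Ω)
    (ε c : ℝ) (hε : ε ∈ Icc (0 : ℝ) (1 / 2))
    (W : ℝ × ℝ × ℝ → ℝ)
    (hWreg : ContDiffOn ℝ 2 W ((univ : Set ℝ) ×ˢ closure Ω))
    (hWper : ∀ s x z : ℝ, W (s, x + ℓ, z) = W (s, x, z))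
    (hWbd : ∀ s : ℝ, ∀ q ∈ frontier Ω, W (s, q.1, q.2) = 0)
    (hWdecay : ∀ δ : ℝ, 0 < δ → ∃ R : ℝ, ∀ s : ℝ, R ≤ |s| →
      ∀ q ∈ closure Ω, |W (s, q.1, q.2)| ≤ δ)
    (hpde : ∀ s : ℝ, ∀ q ∈ Ω,
      -c * Dv W (1, 0, 0) (s, q.1, q.2) - Leps ε W (s, q.1, q.2) = 0) :
    ∀ s : ℝ, ∀ q ∈ closure Ω, W (s, q.1, q.2) = 0 := by
  intro s q hq
  have hle := le_zero_of_periodic_solution hℓ hΩopen hΩsub hΩper hε.1 hWreg hWper hWbd hWdecay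
    hpde s q hq
  have hge := le_zero_of_periodic_solution hℓ hΩopen hΩsub hΩper hε.1 (W := fun p => -W p)
    hWreg.neg (by simp [hWper]) (by simp +contextual [hWbd])
    (fun δ hδ => (hWdecay δ hδ).imp fun R hR s hs q hq => by simpa using hR s hs q hq)
    (c := c) (fun s q hq => by simp only [Dv_neg, Leps_neg]; linarith [hpde s q hq]) s q hq
  linarith

/-- Liouville-type statement: a solution of `−c ∂_s W − L_ε W = 0` with Dirichlet,
periodicity, square-integrability and uniform decay conditions vanishes identically. -/
theorem stmt_4 (lam ℓ : ℝ) (hlam : 0 < lam) (hℓ : 0 < ℓ)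
    (Ω : Set (ℝ × ℝ)) (hΩopen : IsOpen Ω)
    (hΩsub : Ω ⊆ (univ : Set ℝ) ×ˢ Ioo (-lam) lam)
    (hΩper : ∀ q : ℝ × ℝ, q ∈ Ω ↔ (q.1 + ℓ, q.2) ∈ Ω)
    (ε c : ℝ) (hε : ε ∈ Icc (0 : ℝ) (1 / 2))
    (W : ℝ × ℝ × ℝ → ℝ)
    (hWreg : ContDiffOn ℝ 2 W ((univ : Set ℝ) ×ˢ closure Ω))
    (hWper : ∀ s x z : ℝ, W (s, x + ℓ, z) = W (s, x, z))
    (hWbd : ∀ s : ℝ, ∀ q ∈ frontier Ω, W (s, q.1, q.2) = 0)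
    (hW0 : IntegrableOn (fun p => (W p) ^ 2)
      ((univ : Set ℝ) ×ˢ {q ∈ Ω | 0 < q.1 ∧ q.1 < ℓ}) volume)
    (hW1 : ∀ v : ℝ × ℝ × ℝ, IntegrableOn (fun p => (Dv W v p) ^ 2)
      ((univ : Set ℝ) ×ˢ {q ∈ Ω | 0 < q.1 ∧ q.1 < ℓ}) volume)
    (hWdecay : ∀ δ : ℝ, 0 < δ → ∃ R : ℝ, ∀ s : ℝ, R ≤ |s| →
      ∀ q ∈ closure Ω, |W (s, q.1, q.2)| ≤ δ)
    (hWdecay1 : ∀ v : ℝ × ℝ × ℝ, ∀ δ : ℝ, 0 < δ → ∃ R : ℝ, ∀ s : ℝ, R ≤ |s| →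
      ∀ q ∈ closure Ω, |Dv W v (s, q.1, q.2)| ≤ δ)
    (hpde : ∀ s : ℝ, ∀ q ∈ Ω,
      -c * Dv W (1, 0, 0) (s, q.1, q.2) - Leps ε W (s, q.1, q.2) = 0) :
    ∀ s : ℝ, ∀ q ∈ closure Ω, W (s, q.1, q.2) = 0 :=
  stmt_4_general lam ℓ hℓ Ω hΩopen hΩsub hΩper ε c hε W hWreg hWper hWbd hWdecay hpde
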